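/- In the CRSD mechanism, when it is a family's turn to choose, the set of locations available to it (locations j with remaining capacity such that assigning the family to j preserves achievability of an α-approximation) is nonempty whenever preferences are complete, and is independent of the family's own reported preference order. -/

import Mathlib

open Classical

/-- A matching is feasible if each location `j` hosts exactly `q j` families. -/
def feasible {F L : Type} [Fintype F] [DecidableEq L] (q : L → ℕ) (μ : F → L) : Prop :=
  ∀ j : L, (Finset.univ.filter (fun i => μ i = j)).card = q j

/-- The government objective: expected number of successfully integrated families. -/
def z {F L : Type} [Fintype F] (π : F → L → ℝ) (μ : F → L) : ℝ :=
  ∑ i, π i (μ i)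

/-- `μ'` extends the partial matching `p`. -/
def ExtendsP {F L : Type} (μ' : F → L) (p : F → Option L) : Prop :=
  ∀ i j, p i = some j → μ' i = j

/-- There is a feasible completion of the partial matching `p` with objective at least `c`. -/
def okExt {F L : Type} [Fintype F] [DecidableEq L] (q : L → ℕ) (π : F → L → ℝ)
    (c : ℝ) (p : F → Option L) : Prop :=
  ∃ μ' : F → L, feasible q μ' ∧ ExtendsP μ' p ∧ c ≤ z π μ'

/-- Number of families currently assigned to location `j`. -/
def assignedCount {F L : Type} [Fintype F] [DecidableEq L] (p : F → Option L) (j : L) : ℕ :=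
  (Finset.univ.filter (fun i => p i = some j)).card

/-- One step of CRSD: family `i` is assigned to the first location in its preference list
that has remaining capacity and preserves achievability of objective value `c`. -/
noncomputable def crsdStep {F L : Type} [Fintype F] [DecidableEq F] [DecidableEq L]
    (q : L → ℕ) (π : F → L → ℝ) (c : ℝ) (prefs : F → List L)
    (p : F → Option L) (i : F) : F → Option L :=
  match (prefs i).find? (fun j =>
      decide (assignedCount p j < q j ∧ okExt q π c (Function.update p i (some j)))) with
  | some j => Function.update p i (some j)
  | none => p

/-- Running CRSD on the (random) order `order` of families, starting from the empty matching. -/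
noncomputable def crsdRun {F L : Type} [Fintype F] [DecidableEq F] [DecidableEq L]
    (q : L → ℕ) (π : F → L → ℝ) (c : ℝ) (prefs : F → List L)
    (order : List F) : F → Option L :=
  order.foldl (crsdStep q π c prefs) (fun _ => none)

/-- The set of locations available to family `i` given the partial matching `p`:
locations with remaining capacity such that assigning `i` there preserves achievability
of an `α`-approximation. -/
def Avail {F L : Type} [Fintype F] [DecidableEq F] [DecidableEq L]
    (q : L → ℕ) (π : F → L → ℝ) (c : ℝ) (p : F → Option L) (i : F) : Set L :=
  {j | assignedCount p j < q j ∧ okExt q π c (Function.update p i (some j))}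

/-! Every CRSD step keeps the invariant that the partial matching has a feasible completion of
value at least `α z*`, and this holds initially because `α z* ≤ z*`. A completion `μ'` of the
matching met by family `i` sends `i` somewhere, and `μ' i` is then available: `μ'` fills it to
capacity while `i` itself is not yet placed there. The available set depends only on the
matching built by the families before `i`, and their steps never read `i`'s report. -/

theorem ExtendsP.update_self {F L : Type} [DecidableEq F] {μ' : F → L} {p : F → Option L}
    (h : ExtendsP μ' p) (i : F) : ExtendsP μ' (Function.update p i (some (μ' i))) := by
  intro k j hk
  by_cases hki : k = i
  · subst hki
    simpa using hk
  · rw [Function.update_of_ne hki] at hk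
    exact h k j hk

section Crsd

variable {F L : Type} [Fintype F] [DecidableEq L]

theorem assignedCount_lt_of_extendsP {q : L → ℕ} {μ' : F → L} {p : F → Option L}
    (hμ' : feasible q μ') (hext : ExtendsP μ' p) {i : F} (hi : p i = none) :
    assignedCount p (μ' i) < q (μ' i) := by
  rw [← hμ' (μ' i)]
  refine Finset.card_lt_card ⟨fun k hk => ?_, fun hsub => ?_⟩
  · simp only [Finset.mem_filter, Finset.mem_univ, true_and] at hk ⊢
    exact hext k _ hk
  · simpa [hi] using hsub (Finset.mem_filter.mpr ⟨Finset.mem_univ i, rfl⟩)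

theorem okExt_none_of_le {q : L → ℕ} {π : F → L → ℝ} {c : ℝ} {μ : F → L} (hμ : feasible q μ)
    (hc : c ≤ z π μ) : okExt q π c (fun _ => none) :=
  ⟨μ, hμ, (fun _ _ h => nomatch h), hc⟩

variable [DecidableEq F] {q : L → ℕ} {π : F → L → ℝ} {c : ℝ}

theorem Avail_nonempty {p : F → Option L} (hp : okExt q π c p) {i : F} (hi : p i = none) :
    (Avail q π c p i).Nonempty := by
  obtain ⟨μ', hμ', hext, hc⟩ := hp
  exact ⟨μ' i, assignedCount_lt_of_extendsP hμ' hext hi, μ', hμ', hext.update_self i, hc⟩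

theorem crsdStep_apply_of_ne (prefs : F → List L) (p : F → Option L) {k i : F} (h : i ≠ k) :
    crsdStep q π c prefs p k i = p i := by
  unfold crsdStep
  rcases (prefs k).find? _ with _ | j
  · rfl
  · exact Function.update_of_ne h _ _

theorem okExt_crsdStep (prefs : F → List L) {p : F → Option L} (hp : okExt q π c p) (k : F) :
    okExt q π c (crsdStep q π c prefs p k) := by
  unfold crsdStep
  rcases hfind : (prefs k).find? _ with _ | j
  · exact hp
  · have hj := List.find?_some hfind
    rw [decide_eq_true_eq] at hj
    exact hj.2

theorem crsdStep_congr {prefs prefs' : F → List L} {k : F} (h : prefs k = prefs' k)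
    (p : F → Option L) : crsdStep q π c prefs p k = crsdStep q π c prefs' p k := by
  unfold crsdStep
  rw [h]

theorem foldl_crsdStep_apply_of_not_mem (prefs : F → List L) {l : List F} {i : F} (hi : i ∉ l)
    (p : F → Option L) : l.foldl (crsdStep q π c prefs) p i = p i := by
  induction l generalizing p with
  | nil => rfl
  | cons k l ih =>
    rw [List.mem_cons, not_or] at hi
    rw [List.foldl_cons, ih hi.2, crsdStep_apply_of_ne prefs p hi.1]

theorem foldl_crsdStep_congr {prefs prefs' : F → List L} {l : List F}
    (h : ∀ k ∈ l, prefs k = prefs' k) (p : F → Option L) :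
    l.foldl (crsdStep q π c prefs) p = l.foldl (crsdStep q π c prefs') p := by
  induction l generalizing p with
  | nil => rfl
  | cons k l ih =>
    rw [List.foldl_cons, List.foldl_cons, crsdStep_congr (h k List.mem_cons_self)]
    exact ih (fun k' hk' => h k' (List.mem_cons_of_mem k hk')) _

theorem okExt_foldl_crsdStep (prefs : F → List L) (l : List F) {p : F → Option L}
    (hp : okExt q π c p) : okExt q π c (l.foldl (crsdStep q π c prefs) p) := by
  induction l generalizing p with
  | nil => exact hp
  | cons k l ih => exact ih (okExt_crsdStep prefs hp k)

theorem crsdRun_apply_of_not_mem (prefs : F → List L) {l : List F} {i : F} (hi : i ∉ l) :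
    crsdRun q π c prefs l i = none :=
  foldl_crsdStep_apply_of_not_mem prefs hi _

theorem crsdRun_update_of_not_mem (prefs : F → List L) {l : List F} {i : F} (hi : i ∉ l)
    (lie : List L) : crsdRun q π c (Function.update prefs i lie) l = crsdRun q π c prefs l :=
  foldl_crsdStep_congr (fun _ hk => Function.update_of_ne (ne_of_mem_of_not_mem hk hi) _ _) _

end Crsd

theorem crsd_avail_nonempty_and_report_independent_general
    {F L : Type} [Fintype F] [DecidableEq F] [DecidableEq L]
    (q : L → ℕ) (π : F → L → ℝ) (prefs : F → List L) (α zs : ℝ)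
    (hπ : ∀ i j, π i j ∈ Set.Icc (0 : ℝ) 1)
    (hα : α ∈ Set.Icc (0 : ℝ) 1)
    (hzs : IsGreatest {x : ℝ | ∃ μ : F → L, feasible q μ ∧ x = z π μ} zs)
    (order : List F) (horder : order.Nodup)
    (i : F) (pre rest : List F) (hsplit : order = pre ++ i :: rest)
    (lie : List L) :
    (Avail q π (α * zs) (crsdRun q π (α * zs) prefs pre) i).Nonempty ∧
    Avail q π (α * zs) (crsdRun q π (α * zs) prefs pre) i =
      Avail q π (α * zs) (crsdRun q π (α * zs) (Function.update prefs i lie) pre) i := by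
  have hi : i ∉ pre := fun hmem =>
    (List.nodup_append'.mp (hsplit ▸ horder)).2.2 hmem List.mem_cons_self
  obtain ⟨μ, hμ, rfl⟩ := hzs.1
  have hzμ : α * z π μ ≤ z π μ :=
    mul_le_of_le_one_left (Finset.sum_nonneg fun k _ => (hπ k (μ k)).1) hα.2
  have hok := okExt_foldl_crsdStep prefs pre (okExt_none_of_le hμ hzμ)
  exact ⟨Avail_nonempty hok (crsdRun_apply_of_not_mem prefs hi),
    by rw [crsdRun_update_of_not_mem prefs hi]⟩

/-- When it is family `i`'s turn in CRSD, the set of available locations is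
nonempty (given complete preferences) and is independent of `i`'s own reported preference
order. -/
theorem crsd_avail_nonempty_and_report_independent
    {F L : Type} [Fintype F] [Fintype L] [DecidableEq F] [DecidableEq L]
    (q : L → ℕ) (π : F → L → ℝ) (prefs : F → List L) (α zs : ℝ)
    (hq : ∑ j, q j = Fintype.card F)
    (hπ : ∀ i j, π i j ∈ Set.Icc (0 : ℝ) 1)
    (hα : α ∈ Set.Icc (0 : ℝ) 1)
    (hzs : IsGreatest {x : ℝ | ∃ μ : F → L, feasible q μ ∧ x = z π μ} zs)
    (hprefs : ∀ i, (prefs i).Nodup ∧ ∀ j : L, j ∈ prefs i)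
    (order : List F) (horder : order.Nodup)
    (i : F) (pre rest : List F) (hsplit : order = pre ++ i :: rest)
    (lie : List L) (hlie : lie.Nodup ∧ ∀ j : L, j ∈ lie) :
    (Avail q π (α * zs) (crsdRun q π (α * zs) prefs pre) i).Nonempty ∧
    Avail q π (α * zs) (crsdRun q π (α * zs) prefs pre) i =
      Avail q π (α * zs) (crsdRun q π (α * zs) (Function.update prefs i lie) pre) i :=
  crsd_avail_nonempty_and_report_independent_general q π prefs α zs hπ hα hzs order horder i pre
    rest hsplit lie
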